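/- Let φ : G′ → G be a harmonic morphism of graphs and let s : H(G) → ℤ be a slope assignment on G. Define the pullback φ*s : H(G′) → ℤ by (φ*s)(h′) = d_φ(h′)·s(φ(h′)) if φ(h′) ∈ H(G), and (φ*s)(h′) = 0 if φ(h′) ∈ V(G). Then φ*s is a slope assignment on G′, and for every vertex v′ ∈ V(G′) one has Σ_{h′∈T_{v′}G′} (φ*s)(h′) = d_φ(v′) · Σ_{h∈T_{φ(v′)}G} s(h). In particular, if s is harmonic then φ*s is harmonic. -/

import Mathlib

namespace TropDR

open Finset

/-- `Finset.filter` with classical decidability. -/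
noncomputable def cfilter {α : Type*} (p : α → Prop) (s : Finset α) : Finset α :=
  @Finset.filter α p (Classical.decPred p) s

/-- A graph with legs: a finite set `X` together with an idempotent root map `rt`
and an involution `inv` fixing every root vertex. -/
structure PGraph where
  X : Type
  [fintypeX : Fintype X]
  [decEqX : DecidableEq X]
  rt : X → X
  inv : X → X
  rt_idem : ∀ x, rt (rt x) = rt x
  inv_invol : ∀ x, inv (inv x) = x
  inv_fix_rt : ∀ x, inv (rt x) = rt x

attribute [instance] PGraph.fintypeX PGraph.decEqX

namespace PGraph

variable (G : PGraph)

/-- Vertices are the fixed points (= the image) of the root map. -/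
def IsVertex (x : G.X) : Prop := G.rt x = x

/-- Half-edges are the non-vertices. -/
def IsHalf (x : G.X) : Prop := G.rt x ≠ x

/-- Legs are the `inv`-fixed half-edges. -/
def IsLeg (x : G.X) : Prop := G.IsHalf x ∧ G.inv x = x

/-- Halves of genuine edges: half-edges moved by the involution. -/
def IsEdgeHalf (x : G.X) : Prop := G.IsHalf x ∧ G.inv x ≠ x

noncomputable def vertexSet : Finset G.X := cfilter (fun x => G.IsVertex x) Finset.univ

noncomputable def legSet : Finset G.X := cfilter (fun x => G.IsLeg x) Finset.univ

noncomputable def edgeHalfSet : Finset G.X := cfilter (fun x => G.IsEdgeHalf x) Finset.univ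

/-- Tangent directions at a vertex `v`: half-edges rooted at `v`. -/
noncomputable def tangents (v : G.X) : Finset G.X :=
  cfilter (fun h => G.IsHalf h ∧ G.rt h = v) Finset.univ

noncomputable def valence (v : G.X) : ℕ := (G.tangents v).card

/-- The number of edges: half the number of edge half-edges. -/
noncomputable def numEdges : ℕ := G.edgeHalfSet.card / 2

noncomputable def numLegs : ℕ := G.legSet.card

noncomputable def numVertices : ℕ := G.vertexSet.card

/-- Connectedness: the equivalence relation generated by `x ∼ rt x` and `x ∼ inv x`
has a single class (and `X` is nonempty). -/
def Connected : Prop :=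
  Nonempty G.X ∧ ∀ x y : G.X, Relation.EqvGen (fun a b => G.rt a = b ∨ G.inv a = b) x y

/-- A subgraph: a subset of `X` closed under the root map and the involution. -/
def IsSubgraph (F : Finset G.X) : Prop :=
  (∀ x ∈ F, G.rt x ∈ F) ∧ (∀ x ∈ F, G.inv x ∈ F)

/-- Valency of `v` inside a subgraph `F`. -/
noncomputable def valIn (F : Finset G.X) (v : G.X) : ℕ := (G.tangents v ∩ F).card

end PGraph

/-- A morphism of graphs: commutes with the root maps and involutions,
and maps no edge into a leg. -/
structure GraphHom (G' G : PGraph) where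
  toFun : G'.X → G.X
  map_rt : ∀ x, toFun (G'.rt x) = G.rt (toFun x)
  map_inv : ∀ x, toFun (G'.inv x) = G.inv (toFun x)
  edge_not_leg : ∀ h, G'.IsEdgeHalf h → ¬ G.IsLeg (toFun h)

/-- A harmonic morphism of graphs: a graph morphism together with a degree function. -/
structure HarmonicHom (G' G : PGraph) extends GraphHom G' G where
  deg : G'.X → ℕ
  deg_edge : ∀ h, G'.IsEdgeHalf h → deg (G'.inv h) = deg h
  deg_zero_iff : ∀ h, G'.IsHalf h → (deg h = 0 ↔ G.IsVertex (toFun h))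
  harmonic : ∀ v', G'.IsVertex v' → ∀ h, G.IsHalf h → G.rt h = toFun v' →
    deg v' = ∑ h' ∈ cfilter (fun h' => toFun h' = h) (G'.tangents v'), deg h'

namespace HarmonicHom

variable {G' G : PGraph} (φ : HarmonicHom G' G)

/-- A harmonic morphism is finite if it has positive degree on every half-edge. -/
def Finite : Prop := ∀ h, G'.IsHalf h → 0 < φ.deg h

/-- The sum of the degrees over the vertex fiber of `v`. -/
noncomputable def vertexFiberDeg (v : G.X) : ℕ :=
  ∑ v' ∈ cfilter (fun v' => φ.toFun v' = v) G'.vertexSet, φ.deg v'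

end HarmonicHom

/-- A weighted graph: a graph together with a genus function on (all elements;
only the values at vertices are relevant). -/
structure WGraph extends PGraph where
  gw : X → ℕ

namespace WGraph

variable (G : WGraph)

/-- The genus of a (connected) weighted graph. -/
noncomputable def genus : ℤ :=
  (G.toPGraph.numEdges : ℤ) - (G.toPGraph.numVertices : ℤ) + 1 +
    ∑ v ∈ G.toPGraph.vertexSet, (G.gw v : ℤ)

/-- The Euler characteristic of a vertex. -/
noncomputable def chiV (v : G.X) : ℤ :=
  2 - 2 * (G.gw v : ℤ) - (G.toPGraph.valence v : ℤ)

/-- The Euler characteristic of a (connected) weighted graph. -/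
noncomputable def chi : ℤ := 2 - 2 * G.genus - (G.toPGraph.numLegs : ℤ)

end WGraph

/-- The ramification degree of a (finite) harmonic morphism of weighted graphs at `v'`. -/
noncomputable def ram {G' G : WGraph} (φ : HarmonicHom G'.toPGraph G.toPGraph) (v' : G'.X) : ℤ :=
  (φ.deg v' : ℤ) * G.chiV (φ.toFun v') - G'.chiV v'

def Unramified {G' G : WGraph} (φ : HarmonicHom G'.toPGraph G.toPGraph) : Prop :=
  ∀ v', G'.toPGraph.IsVertex v' → ram φ v' = 0

def Effective {G' G : WGraph} (φ : HarmonicHom G'.toPGraph G.toPGraph) : Prop :=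
  ∀ v', G'.toPGraph.IsVertex v' → 0 ≤ ram φ v'

/-- A slope assignment on a graph `G`: an integer on each half-edge (extended by zero on
the vertices), antisymmetric on the two halves of every edge. -/
structure SlopeAssignment (G : PGraph) where
  s : G.X → ℤ
  vertex_zero : ∀ x, G.IsVertex x → s x = 0
  edge_antisym : ∀ h, G.IsEdgeHalf h → s (G.inv h) = - s h

/-- A slope assignment is harmonic if the outgoing slopes at every vertex sum to zero. -/
def SlopeAssignment.Harmonic {G : PGraph} (σ : SlopeAssignment G) : Prop :=
  ∀ v, G.IsVertex v → ∑ h ∈ G.tangents v, σ.s h = 0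

/-! The pullback is `d_φ · (s ∘ φ)`. Antisymmetry on an edge `e'` of `G'`: either `e'` is
contracted to a vertex, where `s` vanishes, or (morphisms map no edge to a leg) it maps onto
an edge of `G`, where `s` is antisymmetric and `d_φ` is constant. For the balancing formula,
split the tangent directions at `v'` along their images: a contracted direction contributes
nothing, and the directions over a fixed `h ∈ T_{φ(v')}G` contribute `d_φ(v') · s(h)` by
harmonicity of `φ`. -/

@[simp]
lemma mem_cfilter {α : Type*} {p : α → Prop} {s : Finset α} {a : α} :
    a ∈ cfilter p s ↔ a ∈ s ∧ p a := by
  simp [cfilter]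

namespace PGraph

variable {G : PGraph}

@[simp]
lemma mem_tangents {v h : G.X} : h ∈ G.tangents v ↔ G.IsHalf h ∧ G.rt h = v := by
  simp [tangents]

lemma inv_eq_self_of_isVertex {v : G.X} (hv : G.IsVertex v) : G.inv v = v := by
  rw [← hv, G.inv_fix_rt]

end PGraph

namespace GraphHom

variable {G' G : PGraph} (φ : GraphHom G' G)

lemma isVertex_map {v : G'.X} (hv : G'.IsVertex v) : G.IsVertex (φ.toFun v) := by
  rw [PGraph.IsVertex, ← φ.map_rt, hv]

lemma isEdgeHalf_map {h : G'.X} (hh : G'.IsEdgeHalf h) (hφh : G.IsHalf (φ.toFun h)) :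
    G.IsEdgeHalf (φ.toFun h) :=
  ⟨hφh, fun hfix => φ.edge_not_leg h hh ⟨hφh, hfix⟩⟩

lemma map_mem_tangents {v h : G'.X} (hh : h ∈ G'.tangents v) (hφh : G.IsHalf (φ.toFun h)) :
    φ.toFun h ∈ G.tangents (φ.toFun v) := by
  rw [PGraph.mem_tangents] at hh ⊢
  exact ⟨hφh, by rw [← φ.map_rt, hh.2]⟩

end GraphHom

namespace SlopeAssignment

variable {G' G : PGraph}

lemma s_map_inv_of_isEdgeHalf (φ : GraphHom G' G) (σ : SlopeAssignment G) {h : G'.X}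
    (hh : G'.IsEdgeHalf h) : σ.s (φ.toFun (G'.inv h)) = -σ.s (φ.toFun h) := by
  rw [φ.map_inv]
  by_cases hv : G.IsVertex (φ.toFun h)
  · rw [PGraph.inv_eq_self_of_isVertex hv, σ.vertex_zero _ hv, neg_zero]
  · exact σ.edge_antisym _ (φ.isEdgeHalf_map hh hv)

def pullback (φ : HarmonicHom G' G) (σ : SlopeAssignment G) : SlopeAssignment G' where
  s x := (φ.deg x : ℤ) * σ.s (φ.toFun x)
  vertex_zero x hx := by rw [σ.vertex_zero _ (φ.isVertex_map hx), mul_zero]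
  edge_antisym h hh := by
    rw [φ.deg_edge h hh, s_map_inv_of_isEdgeHalf φ.toGraphHom σ hh, mul_neg]

variable (φ : HarmonicHom G' G) (σ : SlopeAssignment G)

lemma pullback_s (x : G'.X) : (σ.pullback φ).s x = (φ.deg x : ℤ) * σ.s (φ.toFun x) := rfl

lemma deg_mul_eq_sum_pullback_fiber {v' : G'.X} (hv' : G'.IsVertex v') {h : G.X}
    (hh : h ∈ G.tangents (φ.toFun v')) :
    (φ.deg v' : ℤ) * σ.s h =
      ∑ h' ∈ G'.tangents v' with φ.toFun h' = h, (σ.pullback φ).s h' := by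
  rw [PGraph.mem_tangents] at hh
  rw [φ.harmonic v' hv' h hh.1 hh.2, Nat.cast_sum, Finset.sum_mul]
  refine Finset.sum_congr (by ext; simp) fun h' hh' => ?_
  rw [pullback_s, (Finset.mem_filter.mp hh').2]

theorem sum_tangents_pullback {v' : G'.X} (hv' : G'.IsVertex v') :
    ∑ h' ∈ G'.tangents v', (σ.pullback φ).s h' =
      (φ.deg v' : ℤ) * ∑ h ∈ G.tangents (φ.toFun v'), σ.s h := by
  rw [Finset.mul_sum, Finset.sum_congr rfl fun h hh => deg_mul_eq_sum_pullback_fiber φ σ hv' hh,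
    Finset.sum_fiberwise_eq_sum_filter, Finset.sum_filter_of_ne]
  intro h' hh' hne
  refine φ.map_mem_tangents hh' fun hv => hne ?_
  rw [pullback_s, σ.vertex_zero _ hv, mul_zero]

theorem Harmonic.pullback {σ : SlopeAssignment G} (hσ : σ.Harmonic) : (σ.pullback φ).Harmonic :=
  fun v' hv' => by rw [sum_tangents_pullback φ σ hv', hσ _ (φ.isVertex_map hv'), mul_zero]

end SlopeAssignment

/-- Let `φ : G' → G` be a harmonic morphism of graphs and `s` a slope
assignment on `G`.  The pullback `φ*s`, given by `(φ*s)(h') = d_φ(h')·s(φ(h'))` on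
half-edges mapping to half-edges and `0` on half-edges mapping to vertices (this is the
uniform formula below, since `d_φ` vanishes exactly on the contracted half-edges and `s`
vanishes on vertices), is a slope assignment on `G'`, and for every vertex `v'` of `G'`
one has `Σ_{h' ∈ T_{v'}G'} (φ*s)(h') = d_φ(v') · Σ_{h ∈ T_{φ(v')}G} s(h)`.
In particular, if `s` is harmonic then `φ*s` is harmonic. -/
theorem pullback_of_slope_assignment
    (G' G : PGraph) (φ : HarmonicHom G' G) (σ : SlopeAssignment G) :
    ∃ σ' : SlopeAssignment G',
      (∀ x, σ'.s x = (φ.deg x : ℤ) * σ.s (φ.toFun x)) ∧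
      (∀ v', G'.IsVertex v' →
        ∑ h' ∈ G'.tangents v', σ'.s h' =
          (φ.deg v' : ℤ) * ∑ h ∈ G.tangents (φ.toFun v'), σ.s h) ∧
      (σ.Harmonic → σ'.Harmonic) :=
  ⟨σ.pullback φ, σ.pullback_s φ, fun _ hv' => σ.sum_tangents_pullback φ hv',
    fun hσ => hσ.pullback φ⟩

end TropDR
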